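/- As x → ∞ with α > β > 0 and ν > 0 fixed, f(x) := (x+α)^{−1/2}(x+β)^{−1/2} ((√(x+α)−√(x+β))/(√(x+α)+√(x+β)))^ν ((x+α)^{−1/2}+(x+β)^{−1/2})^{k−2} ₂F₁(ν+1−k/2, 1−k/2; ν+1; ((√(x+α)−√(x+β))/(√(x+α)+√(x+β)))²) satisfies f(x) ~ 2^{k−2−2ν}(α−β)^ν / x^{ν+k/2}; more precisely f(x) = 2^{k−2−2ν}(α−β)^ν x^{−ν−k/2} + O(x^{−ν−k/2−1}). -/

import Mathlib

open scoped Real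

/-- Modified Bessel function of the first kind (principal branch). -/
noncomputable def besselI (ν z : ℂ) : ℂ :=
  ∑' m : ℕ, (z / 2) ^ (2 * (m : ℂ) + ν) / ((m.factorial : ℂ) * Complex.Gamma ((m : ℂ) + 1 + ν))

/-- Modified Bessel function of the second kind. -/
noncomputable def besselK (ν z : ℂ) : ℂ :=
  (↑Real.pi / 2) * (besselI (-ν) z - besselI ν z) / Complex.sin (ν * ↑Real.pi)

/-- Gauss hypergeometric function ₂F₁, defined by its power series. -/
noncomputable def hyp2F1 (a b c z : ℂ) : ℂ :=
  ∑' n : ℕ, ((ascPochhammer ℂ n).eval a * (ascPochhammer ℂ n).eval b) /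
    ((ascPochhammer ℂ n).eval c * (n.factorial : ℂ)) * z ^ n
open Filter Asymptotics

/-!
Put `u = 1/x`, `A = √(1 + αu)` and `B = √(1 + βu)`, so that `√(x+α) = √x·A` and
`√(x+β) = √x·B`. The ratio `r = (√(x+α) - √(x+β))/(√(x+α) + √(x+β)) = (A - B)/(A + B)` is a
differentiable function of `u` vanishing at `u = 0`. Writing `r = ((x+α) - (x+β))/(√(x+α) + √(x+β))²`
shows that the prefactor is `2^(k-2-2ν) (α-β)^ν x^(-ν-k/2)` times
`((A+B)/2)^(k-2-2ν) (AB)^(1-k)`, again differentiable in `u` with value `1` at `u = 0`.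
Since `₂F₁` is analytic at `0` with value `1`, the product of this profile with `₂F₁(r²)`
is `1 + O(u) = 1 + O(1/x)`.
-/

open Topology

theorem ordinaryHypergeometricSeries_radius_pos {𝕂 : Type*} (𝔸 : Type*) [RCLike 𝕂]
    [NormedDivisionRing 𝔸] [NormedAlgebra 𝕂 𝔸] (a b : 𝕂) {c : 𝕂}
    (hc : ∀ n : ℕ, (n : 𝕂) ≠ -c) : 0 < (ordinaryHypergeometricSeries 𝔸 a b c).radius := by
  by_cases hab : ∃ n : ℕ, (n : 𝕂) = -a ∨ (n : 𝕂) = -b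
  · obtain ⟨n, ha | hb⟩ := hab
    · rw [← neg_eq_iff_eq_neg.mpr ha, ordinaryHypergeometric_radius_top_of_neg_nat₁]
      exact ENNReal.zero_lt_top
    · rw [← neg_eq_iff_eq_neg.mpr hb, ordinaryHypergeometric_radius_top_of_neg_nat₂]
      exact ENNReal.zero_lt_top
  · push Not at hab
    rw [ordinaryHypergeometricSeries_radius_eq_one 𝔸 a b c fun n => ⟨(hab n).1, (hab n).2, hc n⟩]
    exact one_pos

theorem analyticAt_ordinaryHypergeometric_zero {𝕂 : Type*} (𝔸 : Type*) [RCLike 𝕂]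
    [NormedDivisionRing 𝔸] [NormedAlgebra 𝕂 𝔸] [CompleteSpace 𝔸] (a b : 𝕂) {c : 𝕂}
    (hc : ∀ n : ℕ, (n : 𝕂) ≠ -c) : AnalyticAt 𝕂 (₂F₁ a b c) (0 : 𝔸) :=
  ((ordinaryHypergeometricSeries 𝔸 a b c).hasFPowerSeriesOnBall
    (ordinaryHypergeometricSeries_radius_pos 𝔸 a b hc)).analyticAt

theorem hyp2F1_eq_ordinaryHypergeometric (a b c : ℂ) : hyp2F1 a b c = ₂F₁ a b c := by
  rw [ordinaryHypergeometric_eq_tsum]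
  funext z
  exact tsum_congr fun n => by rw [smul_eq_mul]; ring

theorem hyp2F1_zero (a b c : ℂ) : hyp2F1 a b c 0 = 1 := by
  simp [hyp2F1_eq_ordinaryHypergeometric]

theorem differentiableAt_hyp2F1_zero (a b : ℂ) {c : ℂ} (hc : ∀ n : ℕ, (n : ℂ) ≠ -c) :
    DifferentiableAt ℂ (hyp2F1 a b c) 0 := by
  rw [hyp2F1_eq_ordinaryHypergeometric]
  exact (analyticAt_ordinaryHypergeometric_zero ℂ a b hc).differentiableAt

theorem prefactor_eq_rpow {s t : ℝ} (ht : 0 < t) (hts : t ≤ s) (ν : ℝ) {k : ℕ} (hk : 2 ≤ k) :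
    ((s - t) / (s + t)) ^ ν / (s * t) * (1 / s + 1 / t) ^ (k - 2) =
      (s ^ 2 - t ^ 2) ^ ν * (s + t) ^ ((k : ℝ) - 2 - 2 * ν) * (s * t) ^ (1 - (k : ℝ)) := by
  have hs : 0 < s := ht.trans_le hts
  have hst : 0 < s + t := by positivity
  have hprod : 0 < s * t := by positivity
  have hratio : (s - t) / (s + t) = (s ^ 2 - t ^ 2) / (s + t) ^ 2 := by field_simp; ring
  have hinv : 1 / s + 1 / t = (s + t) / (s * t) := by field_simp; ring
  have hk' : ((k - 2 : ℕ) : ℝ) = k - 2 := by push_cast [hk]; ring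
  rw [hratio, hinv, Real.div_rpow (by nlinarith) (sq_nonneg _), div_pow,
    ← Real.rpow_natCast (s + t) 2, ← Real.rpow_mul hst.le, ← Real.rpow_natCast (s + t),
    ← Real.rpow_natCast (s * t), hk', Real.rpow_sub hst _ (2 * ν),
    show 1 - (k : ℝ) = -1 - (k - 2) by ring, Real.rpow_sub hprod (-1), Real.rpow_neg_one]
  push_cast
  field_simp

noncomputable def sqrtRatio (α β u : ℝ) : ℝ :=
  (√(1 + α * u) - √(1 + β * u)) / (√(1 + α * u) + √(1 + β * u))

noncomputable def prefactorProfile (k : ℕ) (ν α β u : ℝ) : ℝ :=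
  ((√(1 + α * u) + √(1 + β * u)) / 2) ^ ((k : ℝ) - 2 - 2 * ν) *
    (√(1 + α * u) * √(1 + β * u)) ^ (1 - (k : ℝ))

theorem sqrtRatio_zero (α β : ℝ) : sqrtRatio α β 0 = 0 := by simp [sqrtRatio]

theorem prefactorProfile_zero (k : ℕ) (ν α β : ℝ) : prefactorProfile k ν α β 0 = 1 := by
  simp [prefactorProfile]

theorem differentiableAt_sqrtRatio_zero (α β : ℝ) : DifferentiableAt ℝ (sqrtRatio α β) 0 := by
  unfold sqrtRatio
  fun_prop (disch := norm_num)

theorem differentiableAt_prefactorProfile_zero (k : ℕ) (ν α β : ℝ) :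
    DifferentiableAt ℝ (prefactorProfile k ν α β) 0 := by
  unfold prefactorProfile
  fun_prop (disch := norm_num)

theorem sqrt_add_eq_sqrt_mul_sqrt_one_add {x : ℝ} (hx : 0 < x) (α : ℝ) :
    √(x + α) = √x * √(1 + α * x⁻¹) := by
  rw [← Real.sqrt_mul hx.le]
  congr 1
  field_simp

theorem sqrt_sub_div_sqrt_add_eq_sqrtRatio {x : ℝ} (hx : 0 < x) (α β : ℝ) :
    (√(x + α) - √(x + β)) / (√(x + α) + √(x + β)) = sqrtRatio α β x⁻¹ := by
  rw [sqrt_add_eq_sqrt_mul_sqrt_one_add hx, sqrt_add_eq_sqrt_mul_sqrt_one_add hx, ← mul_sub,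
    ← mul_add, mul_div_mul_left _ _ (Real.sqrt_pos.2 hx).ne', sqrtRatio]

theorem prefactor_sqrt_add_eq_mul_prefactorProfile {k : ℕ} (hk : 2 ≤ k) (ν : ℝ) {α β x : ℝ}
    (hαβ : β ≤ α) (hx : 0 < x) (hxβ : 0 < x + β) :
    ((√(x + α) - √(x + β)) / (√(x + α) + √(x + β))) ^ ν / (√(x + α) * √(x + β)) *
        (1 / √(x + α) + 1 / √(x + β)) ^ (k - 2) =
      2 ^ ((k : ℝ) - 2 - 2 * ν) * (α - β) ^ ν * x ^ (-(ν + (k : ℝ) / 2)) *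
        prefactorProfile k ν α β x⁻¹ := by
  rw [prefactor_eq_rpow (Real.sqrt_pos.2 hxβ) (Real.sqrt_le_sqrt (by linarith)) ν hk,
    Real.sq_sqrt (by linarith), Real.sq_sqrt hxβ.le, add_sub_add_left_eq_sub,
    sqrt_add_eq_sqrt_mul_sqrt_one_add hx α, sqrt_add_eq_sqrt_mul_sqrt_one_add hx β,
    prefactorProfile]
  set A := √(1 + α * x⁻¹)
  set B := √(1 + β * x⁻¹)
  have hA : 0 ≤ A := Real.sqrt_nonneg _
  have hB : 0 ≤ B := Real.sqrt_nonneg _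
  rw [← mul_add, mul_mul_mul_comm, Real.mul_self_sqrt hx.le,
    Real.mul_rpow (Real.sqrt_nonneg x) (by positivity), Real.mul_rpow hx.le (by positivity),
    Real.div_rpow (by positivity) zero_le_two, Real.sqrt_eq_rpow, ← Real.rpow_mul hx.le,
    show -(ν + (k : ℝ) / 2) = 1 / 2 * (k - 2 - 2 * ν) + (1 - k) by ring, Real.rpow_add hx]
  field_simp

theorem prefactorProfile_mul_hyp2F1_sub_one_isBigO (k : ℕ) (ν α β : ℝ) (a b : ℂ) {c : ℂ}
    (hc : ∀ n : ℕ, (n : ℂ) ≠ -c) :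
    (fun u : ℝ => (prefactorProfile k ν α β u : ℂ) *
        hyp2F1 a b c ((sqrtRatio α β u ^ 2 : ℝ) : ℂ) - 1) =O[𝓝 0] fun u => u := by
  have hz : DifferentiableAt ℝ (fun u : ℝ => ((sqrtRatio α β u ^ 2 : ℝ) : ℂ)) 0 := by
    have := differentiableAt_sqrtRatio_zero α β
    fun_prop
  have hF : DifferentiableAt ℝ (fun u : ℝ => hyp2F1 a b c ((sqrtRatio α β u ^ 2 : ℝ) : ℂ)) 0 := by
    refine DifferentiableAt.comp (𝕜 := ℝ) (g := hyp2F1 a b c) 0 ?_ hz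
    simpa [sqrtRatio_zero] using (differentiableAt_hyp2F1_zero a b hc).restrictScalars ℝ
  have hG : DifferentiableAt ℝ (fun u : ℝ => (prefactorProfile k ν α β u : ℂ)) 0 := by
    have := differentiableAt_prefactorProfile_zero k ν α β
    fun_prop
  simpa [prefactorProfile_zero, sqrtRatio_zero, hyp2F1_zero] using
    (hG.mul hF).isBigO_sub

theorem f_asymptotic_general (k : ℕ) (hk : 2 ≤ k) (ν : ℝ) (hν : 0 < ν)
    (α β : ℝ) (hαβ : β < α) :
    (fun x : ℝ =>
        ((((Real.sqrt (x + α) - Real.sqrt (x + β)) /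
            (Real.sqrt (x + α) + Real.sqrt (x + β))) ^ ν /
            (Real.sqrt (x + α) * Real.sqrt (x + β)) *
            (1 / Real.sqrt (x + α) + 1 / Real.sqrt (x + β)) ^ (k - 2) : ℝ) : ℂ) *
          hyp2F1 ((ν : ℂ) + 1 - k / 2) (1 - (k : ℂ) / 2) ((ν : ℂ) + 1)
            ((((Real.sqrt (x + α) - Real.sqrt (x + β)) /
                (Real.sqrt (x + α) + Real.sqrt (x + β))) ^ 2 : ℝ) : ℂ) -
          (((2 : ℝ) ^ ((k : ℝ) - 2 - 2 * ν) * (α - β) ^ ν *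
              x ^ (-(ν + (k : ℝ) / 2)) : ℝ) : ℂ)) =O[atTop]
      fun x : ℝ => x ^ (-(ν + (k : ℝ) / 2) - 1) := by
  set p := -(ν + (k : ℝ) / 2)
  set C := (2 : ℝ) ^ ((k : ℝ) - 2 - 2 * ν) * (α - β) ^ ν
  have hc : ∀ n : ℕ, (n : ℂ) ≠ -((ν : ℂ) + 1) := fun n h => by
    have := congrArg Complex.re h
    simp only [Complex.natCast_re, Complex.neg_re, Complex.add_re, Complex.ofReal_re,
      Complex.one_re] at this
    linarith [n.cast_nonneg (α := ℝ)]
  have hprofile := (prefactorProfile_mul_hyp2F1_sub_one_isBigO k ν α β ((ν : ℂ) + 1 - k / 2)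
    (1 - (k : ℂ) / 2) hc).comp_tendsto tendsto_inv_atTop_zero
  have hleading : (fun x : ℝ => ((C * x ^ p : ℝ) : ℂ)) =O[atTop] fun x => x ^ p :=
    (Complex.ofRealCLM.isBigO_comp _ _).trans (isBigO_const_mul_self C _ _)
  refine (hleading.mul hprofile).congr' ?_ ?_
  · filter_upwards [eventually_gt_atTop 0, eventually_gt_atTop (-β)] with x hx hxβ
    rw [prefactor_sqrt_add_eq_mul_prefactorProfile hk ν hαβ.le hx (by linarith),
      sqrt_sub_div_sqrt_add_eq_sqrtRatio hx]
    simp only [Function.comp_apply, C, p]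
    push_cast
    ring
  · filter_upwards [eventually_gt_atTop 0] with x hx
    rw [Function.comp_apply, Real.rpow_sub_one hx.ne', div_eq_mul_inv]

theorem f_asymptotic (k : ℕ) (hk : 2 ≤ k) (ν : ℝ) (hν : 0 < ν)
    (α β : ℝ) (hβ : 0 < β) (hαβ : β < α) :
    (fun x : ℝ =>
        ((((Real.sqrt (x + α) - Real.sqrt (x + β)) /
            (Real.sqrt (x + α) + Real.sqrt (x + β))) ^ ν /
            (Real.sqrt (x + α) * Real.sqrt (x + β)) *
            (1 / Real.sqrt (x + α) + 1 / Real.sqrt (x + β)) ^ (k - 2) : ℝ) : ℂ) *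
          hyp2F1 ((ν : ℂ) + 1 - k / 2) (1 - (k : ℂ) / 2) ((ν : ℂ) + 1)
            ((((Real.sqrt (x + α) - Real.sqrt (x + β)) /
                (Real.sqrt (x + α) + Real.sqrt (x + β))) ^ 2 : ℝ) : ℂ) -
          (((2 : ℝ) ^ ((k : ℝ) - 2 - 2 * ν) * (α - β) ^ ν *
              x ^ (-(ν + (k : ℝ) / 2)) : ℝ) : ℂ)) =O[atTop]
      fun x : ℝ => x ^ (-(ν + (k : ℝ) / 2) - 1) :=
  f_asymptotic_general k hk ν hν α β hαβ
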